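/- Consider the DC power flow recourse constraints on a finite bus set N and branch set E ⊆ N × N with binary statuses α : N → {0,1} and β : E → {0,1} satisfying β_{nm} ≤ α_n and β_{nm} ≤ α_m. Suppose the parameters satisfy 0 ≤ p̲_n ≤ p̄_n for all n, s̄_{nm} ≥ 0 for all branches, load p_n^load ≥ 0, M ≥ 0, θ̄ ≥ 0, and θ̄_Δ ≥ 0. Then the point given by θ_n = 0 for all n, p̃_{nm} = 0 for all branches, δ_n = 0 for all n, and p̂_n = p̌_n = p̲_n·α_n for all n satisfies all of the constraints: Kirchhoff's current law p̂_n − p̌_n − p_n^load δ_n + Σ_{incoming} p̃ − Σ_{outgoing} p̃ = 0 at every bus; the big-M Ohm's law inequalities M(β_{nm}−1) ≤ −p̃_{nm} − b_{nm}(θ_n − θ_m) ≤ M(1−β_{nm}); the conditional phase-angle-difference bounds −2(1−β_{nm})θ̄ − β_{nm}θ̄_Δ ≤ θ_n − θ_m ≤ 2(1−β_{nm})θ̄ + β_{nm}θ̄_Δ; the flow limits −s̄_{nm}β_{nm} ≤ p̃_{nm} ≤ s̄_{nm}β_{nm}; the generation limits p̲_n α_n ≤ p̂_n ≤ p̄_n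 α_n; the overgeneration limits 0 ≤ p̌_n ≤ p̂_n; the bounds 0 ≤ δ_n ≤ 1 and |θ_n| ≤ θ̄; and θ at the reference bus equals 0. Hence the recourse problem is always feasible (relatively complete recourse). -/
import Mathlib


open Finset in
/-- Relatively complete recourse: under the stated sign conditions on the parameters, the
point with all phase angles `θ = 0`, all branch flows `p̃ = 0`, all load satisfaction
proportions `δ = 0`, and generation equal to overgeneration equal to `p̲_n · α_n`,
satisfies every constraint of the DC power flow recourse problem. -/
theorem dc_recourse_relatively_complete
    (N : Type*) [Fintype N] [DecidableEq N]
    (E : Finset (N × N))                             -- branch set, E ⊆ N × N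
    (α : N → ℝ) (β : N × N → ℝ)
    (hα : ∀ n, α n = 0 ∨ α n = 1)
    (hβ : ∀ e ∈ E, β e = 0 ∨ β e = 1)
    (hβα₁ : ∀ e ∈ E, β e ≤ α e.1) (hβα₂ : ∀ e ∈ E, β e ≤ α e.2)
    (b : N × N → ℝ)                                  -- susceptances
    (plow pup : N → ℝ) (hplow : ∀ n, 0 ≤ plow n) (hpbounds : ∀ n, plow n ≤ pup n)
    (sbar : N × N → ℝ) (hsbar : ∀ e ∈ E, 0 ≤ sbar e)
    (pload : N → ℝ) (hpload : ∀ n, 0 ≤ pload n)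
    (M θbar θdelta : ℝ) (hM : 0 ≤ M) (hθbar : 0 ≤ θbar) (hθdelta : 0 ≤ θdelta)
    (nref : N)
    -- the candidate point
    (θ : N → ℝ) (hθ : ∀ n, θ n = 0)
    (pt : N × N → ℝ) (hpt : ∀ e, pt e = 0)
    (δ : N → ℝ) (hδ : ∀ n, δ n = 0)
    (phat pcheck : N → ℝ)
    (hphat : ∀ n, phat n = plow n * α n) (hpcheck : ∀ n, pcheck n = plow n * α n) :
    -- Kirchhoff's current law at every bus
    (∀ n : N, phat n - pcheck n - pload n * δ n
        + ∑ m ∈ univ.filter (fun m => (m, n) ∈ E), pt (m, n)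
        - ∑ m ∈ univ.filter (fun m => (n, m) ∈ E), pt (n, m) = 0) ∧
    -- big-M Ohm's law inequalities
    (∀ e ∈ E, M * (β e - 1) ≤ -pt e - b e * (θ e.1 - θ e.2) ∧
        -pt e - b e * (θ e.1 - θ e.2) ≤ M * (1 - β e)) ∧
    -- conditional phase-angle-difference bounds
    (∀ e ∈ E, -(2 * (1 - β e) * θbar) - β e * θdelta ≤ θ e.1 - θ e.2 ∧
        θ e.1 - θ e.2 ≤ 2 * (1 - β e) * θbar + β e * θdelta) ∧
    -- flow limits
    (∀ e ∈ E, -(sbar e * β e) ≤ pt e ∧ pt e ≤ sbar e * β e) ∧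
    -- generation limits
    (∀ n : N, plow n * α n ≤ phat n ∧ phat n ≤ pup n * α n) ∧
    -- overgeneration limits
    (∀ n : N, 0 ≤ pcheck n ∧ pcheck n ≤ phat n) ∧
    -- variable bounds
    (∀ n : N, 0 ≤ δ n ∧ δ n ≤ 1) ∧
    (∀ n : N, |θ n| ≤ θbar) ∧
    -- reference bus
    θ nref = 0 := by

  have hβ0 : ∀ e ∈ E, 0 ≤ β e ∧ β e ≤ 1 := by
    intro e he
    rcases hβ e he with h | h <;> simp [h]
  have hα0 : ∀ n, 0 ≤ α n ∧ α n ≤ 1 := by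
    intro n; rcases hα n with h | h <;> simp [h]
  refine ⟨?_, ?_, ?_, ?_, ?_, ?_, ?_, ?_, ?_⟩
  · intro n; simp [hphat, hpcheck, hδ, hpt]
  · intro e he
    obtain ⟨h0, h1⟩ := hβ0 e he
    constructor
    · simp [hpt, hθ]; nlinarith
    · simp [hpt, hθ]; nlinarith
  · intro e he
    obtain ⟨h0, h1⟩ := hβ0 e he
    constructor
    · simp [hθ]; nlinarith
    · simp [hθ]; nlinarith
  · intro e he
    obtain ⟨h0, h1⟩ := hβ0 e he
    have := hsbar e he
    constructor
    · simp [hpt]; positivity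
    · simp [hpt]; positivity
  · intro n
    obtain ⟨h0, h1⟩ := hα0 n
    refine ⟨le_of_eq (hphat n).symm, ?_⟩
    rw [hphat]
    nlinarith [hpbounds n, hplow n]
  · intro n
    obtain ⟨h0, h1⟩ := hα0 n
    rw [hphat, hpcheck]
    exact ⟨mul_nonneg (hplow n) h0, le_refl _⟩
  · intro n; simp [hδ]
  · intro n; simp [hθ, hθbar]
  · exact hθ nref
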